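/- arXiv:1907.06109 — 2 statements merged into one kernel-verified Lean document; each statement's English description precedes it below -/
import Mathlib

section
/- Membrane energy of the regularized cone: Let α ∈ (0, π/2), h ∈ (0,1), and define on the sector S: u(x) = ½(arg(x) x⊥ − x) and v_h(x) = |x| if |x| ≥ h, v_h(x) = |x|²/(2h) + h/2 if |x| < h. Then ∫_S |∇u + ∇uᵀ + ∇v_h ⊗ ∇v_h|² dx ≤ 2α h², where |·| is the Frobenius norm. -/
open MeasureTheory Real Set Matrix
open scoped RealInnerProductSpace

noncomputable section

/-- The plane `ℝ²` with the Euclidean norm. -/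
abbrev E2 : Type := EuclideanSpace ℝ (Fin 2)

/-- The vector `(a, b) ∈ ℝ²`. -/
def vec2 (a b : ℝ) : E2 := (EuclideanSpace.equiv (Fin 2) ℝ).symm ![a, b]

/-- The polar angle of `x`, valued in `(−π, π]`. -/
def eArg (x : E2) : ℝ := Complex.arg ⟨x 0, x 1⟩

/-- The rotation of `x` by `π/2`: `x^⊥ = (−x₂, x₁)`. -/
def perp (x : E2) : E2 := vec2 (-(x 1)) (x 0)

/-- The `i`-th partial derivative. -/
def pd (i : Fin 2) (f : E2 → ℝ) (x : E2) : ℝ := fderiv ℝ f x (EuclideanSpace.single i 1)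

/-- The gradient, as a vector in `ℝ²`. -/
def grad2 (f : E2 → ℝ) (x : E2) : E2 := vec2 (pd 0 f x) (pd 1 f x)

/-- The Hessian matrix `(∂ᵢ∂ⱼ f)`. -/
def hess (f : E2 → ℝ) (x : E2) : Matrix (Fin 2) (Fin 2) ℝ :=
  Matrix.of fun i j => pd i (pd j f) x

/-- The Jacobian matrix `(∂ⱼ uᵢ)` of a map `u : ℝ² → ℝ²`. -/
def jac (u : E2 → E2) (x : E2) : Matrix (Fin 2) (Fin 2) ℝ :=
  Matrix.of fun i j => fderiv ℝ u x (EuclideanSpace.single j 1) i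

/-- The outer product `a ⊗ b` of two vectors in `ℝ²`. -/
def outo (a b : E2) : Matrix (Fin 2) (Fin 2) ℝ := Matrix.of fun i j => a i * b j

/-- The squared Frobenius norm of a `2 × 2` matrix. -/
def frob2 (M : Matrix (Fin 2) (Fin 2) ℝ) : ℝ := ∑ i, ∑ j, (M i j) ^ 2

/-- The membrane strain `∇u + ∇uᵀ + ∇v ⊗ ∇v`. -/
def strain (u : E2 → E2) (v : E2 → ℝ) (x : E2) : Matrix (Fin 2) (Fin 2) ℝ :=
  jac u x + (jac u x)ᵀ + outo (grad2 v x) (grad2 v x)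

/-- The open sector `S` of opening angle `2α` inside the unit disc. -/
def sector (α : ℝ) : Set E2 :=
  {x | ∃ r φ : ℝ, 0 < r ∧ r < 1 ∧ -α < φ ∧ φ < α ∧ x = r • vec2 (Real.cos φ) (Real.sin φ)}

/-- The curved part `Γ` of the boundary of the sector. -/
def GammaS (α : ℝ) : Set E2 := closure (sector α) ∩ Metric.sphere (0 : E2) 1

/-- The scaled sector `2S`. -/
def twoS (α : ℝ) : Set E2 := (fun x : E2 => (2 : ℝ) • x) '' sector α

/-- The in-plane displacement `u₀(x) = ½ (arg x · x^⊥ − x)` of the conical deformation. -/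
def coneU (x : E2) : E2 := (2⁻¹ : ℝ) • (eArg x • perp x - x)

/-- The Föppl–von-Kármán energy `E_h(u,v)`. -/
def FvK (α h : ℝ) (u : E2 → E2) (v : E2 → ℝ) : ℝ :=
  ∫ x in sector α, (frob2 (strain u v x) + h ^ 2 * frob2 (hess v x))

/-- The admissible class `𝒜`: `u ∈ W^{1,2}(S;ℝ²)`, `v ∈ W^{2,2}(S)` convex, with the
boundary conditions `v = 1`, `∇v(x) = x`, `u(x) = ½(arg x · x^⊥ − x)` on `Γ`. -/
structure Admissible (α : ℝ) (u : E2 → E2) (v : E2 → ℝ) : Prop where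
  u_aediff : ∀ᵐ x ∂(volume.restrict (sector α)), DifferentiableAt ℝ u x
  u_L2 : IntegrableOn (fun x => ‖u x‖ ^ 2) (sector α)
  uD_L2 : IntegrableOn (fun x => frob2 (jac u x)) (sector α)
  v_convex : ConvexOn ℝ (sector α) v
  v_aediff : ∀ᵐ x ∂(volume.restrict (sector α)),
      DifferentiableAt ℝ v x ∧ ∀ i, DifferentiableAt ℝ (pd i v) x
  v_L2 : IntegrableOn (fun x => (v x) ^ 2) (sector α)
  vD_L2 : IntegrableOn (fun x => ‖grad2 v x‖ ^ 2) (sector α)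
  vD2_L2 : IntegrableOn (fun x => frob2 (hess v x)) (sector α)
  bc_v : ∀ x ∈ GammaS α, v x = 1
  bc_dv : ∀ x ∈ GammaS α, grad2 v x = x
  bc_u : ∀ x ∈ GammaS α, u x = coneU x

/-- The regularized cone `v_h(x) = |x|` for `|x| ≥ h`, `v_h(x) = |x|²/(2h) + h/2` for `|x| < h`. -/
def vh (h : ℝ) (x : E2) : ℝ := if ‖x‖ < h then ‖x‖ ^ 2 / (2 * h) + h / 2 else ‖x‖

/-!
Identify `ℝ²` with `ℂ`: on the sector `arg` is smooth with `∇ arg x = x^⊥ / |x|²`, and the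
rotation part of `u` has skew-symmetric gradient, so `∇u + ∇uᵀ = -x ⊗ x / |x|²`. Since
`∇v_h = x / |x|` outside `B_h`, the strain vanishes there; inside, `∇v_h = x / h` and the strain
is `(1/h² - 1/|x|²) x ⊗ x`, whose squared norm `(1 - |x|²/h²)²` is at most `1`. Hence the energy
is at most the area of `S ∩ B_h`, and that set lies in the box `(0, h) × (-h sin α, h sin α)` of
area `2 h² sin α ≤ 2 α h²`.
-/

@[simp] lemma vec2_apply_zero (a b : ℝ) : vec2 a b 0 = a := rfl

@[simp] lemma vec2_apply_one (a b : ℝ) : vec2 a b 1 = b := rfl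

@[simp] lemma perp_apply_zero (x : E2) : perp x 0 = -x 1 := rfl

@[simp] lemma perp_apply_one (x : E2) : perp x 1 = x 0 := rfl

lemma E2.norm_sq_eq (x : E2) : ‖x‖ ^ 2 = x 0 ^ 2 + x 1 ^ 2 := by
  simp [EuclideanSpace.real_norm_sq_eq, Fin.sum_univ_two]

lemma E2.inner_eq (x v : E2) : ⟪x, v⟫ = x 0 * v 0 + x 1 * v 1 := by
  simp [PiLp.inner_apply, Fin.sum_univ_two, mul_comm]

lemma frob2_nonneg (M : Matrix (Fin 2) (Fin 2) ℝ) : 0 ≤ frob2 M := by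
  unfold frob2; positivity

lemma frob2_smul_outo_self (t : ℝ) (x : E2) : frob2 (t • outo x x) = (t * ‖x‖ ^ 2) ^ 2 := by
  simp [frob2, outo, Fin.sum_univ_two, E2.norm_sq_eq]; ring

def toComplex : E2 ≃ₗᵢ[ℝ] ℂ := Complex.orthonormalBasisOneI.repr.symm

@[simp] lemma toComplex_re (x : E2) : (toComplex x).re = x 0 := by simp [toComplex]

@[simp] lemma toComplex_im (x : E2) : (toComplex x).im = x 1 := by simp [toComplex]

lemma eArg_eq_arg_toComplex (x : E2) : eArg x = Complex.arg (toComplex x) := by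
  rw [eArg]; congr 1; apply Complex.ext <;> simp

lemma toComplex_smul_vec2_cos_sin (r φ : ℝ) :
    toComplex (r • vec2 (Real.cos φ) (Real.sin φ)) = Complex.polarCoord.symm (r, φ) := by
  apply Complex.ext <;> simp [Complex.cos_ofReal_re, Complex.sin_ofReal_re]

lemma sector_eq_preimage_polarCoord_symm (α : ℝ) :
    sector α = toComplex ⁻¹' (Complex.polarCoord.symm '' (Ioo 0 1 ×ˢ Ioo (-α) α)) := by
  ext x
  simp only [sector, mem_ofPred_eq, mem_preimage, mem_image, mem_prod, mem_Ioo, Prod.exists]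
  constructor
  · rintro ⟨r, φ, hr0, hr1, hφ0, hφ1, rfl⟩
    exact ⟨r, φ, ⟨⟨hr0, hr1⟩, hφ0, hφ1⟩, (toComplex_smul_vec2_cos_sin r φ).symm⟩
  · rintro ⟨r, φ, ⟨⟨hr0, hr1⟩, hφ0, hφ1⟩, hx⟩
    refine ⟨r, φ, hr0, hr1, hφ0, hφ1, toComplex.injective ?_⟩
    rw [toComplex_smul_vec2_cos_sin, hx]

lemma Ioo_prod_Ioo_subset_polarCoord_target {α : ℝ} (hα : α ≤ π) :
    Ioo 0 1 ×ˢ Ioo (-α) α ⊆ Complex.polarCoord.target := by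
  rw [Complex.polarCoord_target]
  exact prod_mono Ioo_subset_Ioi_self (Ioo_subset_Ioo (neg_le_neg hα) hα)

lemma isOpen_sector {α : ℝ} (hα : α ≤ π) : IsOpen (sector α) := by
  rw [sector_eq_preimage_polarCoord_symm]
  exact (Complex.polarCoord.symm.isOpen_image_of_subset_source (isOpen_Ioo.prod isOpen_Ioo)
    (Ioo_prod_Ioo_subset_polarCoord_target hα)).preimage toComplex.continuous

lemma sector_subset_slitPlane {α : ℝ} (hα : α ≤ π) :
    sector α ⊆ toComplex ⁻¹' Complex.slitPlane := by
  rw [sector_eq_preimage_polarCoord_symm, ← Complex.polarCoord_source,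
    ← Complex.polarCoord.symm_image_target_eq_source]
  exact preimage_mono (image_mono (Ioo_prod_Ioo_subset_polarCoord_target hα))

lemma hasFDerivAt_eArg {x : E2} (hx : toComplex x ∈ Complex.slitPlane) :
    HasFDerivAt eArg ((‖x‖ ^ 2)⁻¹ • innerSL ℝ (perp x)) x := by
  have hlog := Complex.imCLM.hasFDerivAt.comp x
    (((Complex.hasStrictDerivAt_log hx).hasDerivAt.hasFDerivAt.restrictScalars ℝ).comp x
      toComplex.toContinuousLinearEquiv.hasFDerivAt)
  refine (hlog.congr_of_eventuallyEq (.of_forall fun y => ?_)).congr_fderiv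
    (ContinuousLinearMap.ext fun v => ?_)
  · simp [eArg_eq_arg_toComplex, Complex.log_im]
  have hn : x 0 ^ 2 + x 1 ^ 2 ≠ 0 := by
    rw [← E2.norm_sq_eq]; simpa using Complex.slitPlane_ne_zero hx
  simp [E2.inner_eq, E2.norm_sq_eq, Complex.inv_im, Complex.normSq_apply]
  field_simp

def perpL : E2 →L[ℝ] E2 := LinearMap.toContinuousLinearMap
  { toFun := perp
    map_add' := fun x y => by ext i; fin_cases i <;> simp [perp, vec2]; ring
    map_smul' := fun c x => by ext i; fin_cases i <;> simp [perp, vec2] }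

@[simp] lemma perpL_apply (x : E2) : perpL x = perp x := rfl

lemma hasFDerivAt_coneU {x : E2} (hx : toComplex x ∈ Complex.slitPlane) :
    HasFDerivAt coneU ((2⁻¹ : ℝ) • (eArg x • perpL
      + ((‖x‖ ^ 2)⁻¹ • innerSL ℝ (perp x)).smulRight (perp x) - ContinuousLinearMap.id ℝ E2)) x :=
  (((hasFDerivAt_eArg hx).smul perpL.hasFDerivAt).sub (hasFDerivAt_id x)).const_smul (2⁻¹ : ℝ)

lemma jac_coneU_add_transpose {x : E2} (hx : toComplex x ∈ Complex.slitPlane) :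
    jac coneU x + (jac coneU x)ᵀ = -(‖x‖ ^ 2)⁻¹ • outo x x := by
  have hn : x 0 ^ 2 + x 1 ^ 2 ≠ 0 := by
    rw [← E2.norm_sq_eq]; simpa using Complex.slitPlane_ne_zero hx
  ext i j
  simp only [jac, (hasFDerivAt_coneU hx).fderiv, Matrix.add_apply, Matrix.transpose_apply,
    Matrix.of_apply, Matrix.smul_apply, outo, E2.norm_sq_eq]
  fin_cases i <;> fin_cases j <;> simp [E2.inner_eq] <;> field_simp <;> ring

lemma strain_coneU_of_grad2_eq_smul {v : E2 → ℝ} {x : E2} {c : ℝ}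
    (hx : toComplex x ∈ Complex.slitPlane) (hv : grad2 v x = c • x) :
    strain coneU v x = (c ^ 2 - (‖x‖ ^ 2)⁻¹) • outo x x := by
  rw [strain, jac_coneU_add_transpose hx, hv]
  ext i j; simp [outo]; ring

lemma grad2_eq_smul_of_hasFDerivAt {f : E2 → ℝ} {x : E2} {c : ℝ}
    (hf : HasFDerivAt f (c • innerSL ℝ x) x) : grad2 f x = c • x := by
  ext i; fin_cases i <;> simp [grad2, pd, hf.fderiv, E2.inner_eq]

lemma hasFDerivAt_vh_of_lt {h : ℝ} {x : E2} (hx : ‖x‖ < h) :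
    HasFDerivAt (vh h) (h⁻¹ • innerSL ℝ x) x := by
  have hev : (fun y : E2 => (2 * h)⁻¹ * ‖y‖ ^ 2 + h / 2) =ᶠ[nhds x] vh h := by
    filter_upwards [(isOpen_lt continuous_norm continuous_const).mem_nhds hx] with y hy
    simp only [vh, if_pos (show ‖y‖ < h from hy), div_eq_inv_mul]
  refine ((((hasStrictFDerivAt_norm_sq x).hasFDerivAt.const_mul (2 * h)⁻¹).add_const (h / 2)
    ).congr_of_eventuallyEq hev.symm).congr_fderiv ?_
  ext v; simp; ring

lemma hasFDerivAt_vh_of_gt {h : ℝ} (hh : 0 ≤ h) {x : E2} (hx : h < ‖x‖) :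
    HasFDerivAt (vh h) (‖x‖⁻¹ • innerSL ℝ x) x := by
  have hx0 : 0 < ‖x‖ := hh.trans_lt hx
  have hev : (fun y : E2 => √(‖y‖ ^ 2)) =ᶠ[nhds x] vh h := by
    filter_upwards [(isOpen_lt continuous_const continuous_norm).mem_nhds hx] with y hy
    simp only [vh, if_neg (not_lt.2 (le_of_lt (show h < ‖y‖ from hy))),
      Real.sqrt_sq (norm_nonneg y)]
  refine (((hasStrictFDerivAt_norm_sq x).hasFDerivAt.sqrt (by positivity)).congr_of_eventuallyEq
    hev.symm).congr_fderiv ?_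
  ext v; simp [Real.sqrt_sq (norm_nonneg x)]; field_simp

lemma frob2_strain_coneU_vh_le_indicator {h : ℝ} (hh : 0 < h) {x : E2}
    (hx : toComplex x ∈ Complex.slitPlane) (hxh : ‖x‖ ≠ h) :
    frob2 (strain coneU (vh h) x) ≤ (Metric.ball 0 h).indicator 1 x := by
  have hx0 : 0 < ‖x‖ := norm_pos_iff.2 (by simpa using Complex.slitPlane_ne_zero hx)
  rcases hxh.lt_or_gt with hlt | hgt
  · rw [strain_coneU_of_grad2_eq_smul hx
      (grad2_eq_smul_of_hasFDerivAt (hasFDerivAt_vh_of_lt hlt)), frob2_smul_outo_self,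
      Set.indicator_of_mem (mem_ball_zero_iff.2 hlt), Pi.one_apply]
    have hq : ‖x‖ ^ 2 / h ^ 2 ≤ 1 := by
      rw [div_le_one (by positivity)]; gcongr
    have : (h⁻¹ ^ 2 - (‖x‖ ^ 2)⁻¹) * ‖x‖ ^ 2 = ‖x‖ ^ 2 / h ^ 2 - 1 := by field_simp
    rw [this]
    nlinarith [div_nonneg (sq_nonneg ‖x‖) (sq_nonneg h)]
  · rw [strain_coneU_of_grad2_eq_smul hx
      (grad2_eq_smul_of_hasFDerivAt (hasFDerivAt_vh_of_gt hh.le hgt)), frob2_smul_outo_self,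
      inv_pow, sub_self, zero_mul, sq, mul_zero]
    exact Set.indicator_nonneg (fun _ _ => zero_le_one) x

lemma sector_inter_ball_subset {α : ℝ} (hα : α ≤ π / 2) (h : ℝ) :
    sector α ∩ Metric.ball 0 h ⊆
      {y : E2 | y 0 ∈ Ioo 0 h ∧ y 1 ∈ Ioo (-(h * Real.sin α)) (h * Real.sin α)} := by
  rintro _ ⟨⟨r, φ, hr0, -, hφ0, hφ1, rfl⟩, hxh⟩
  have hrh : r < h := by
    have hn : ‖vec2 (Real.cos φ) (Real.sin φ)‖ = 1 := by
      simp [EuclideanSpace.norm_eq, Fin.sum_univ_two]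
    simpa [norm_smul, hn, abs_of_pos hr0] using hxh
  have hφ : -(π / 2) < φ ∧ φ < π / 2 := ⟨by linarith, by linarith⟩
  have hsin : |Real.sin φ| < Real.sin α := by
    rw [abs_lt, ← Real.sin_neg]
    exact ⟨Real.strictMonoOn_sin ⟨by linarith, by linarith⟩ ⟨by linarith, by linarith⟩ hφ0,
      Real.strictMonoOn_sin ⟨by linarith, by linarith⟩ ⟨by linarith, by linarith⟩ hφ1⟩
  have hcos : 0 < Real.cos φ := Real.cos_pos_of_mem_Ioo hφ
  refine ⟨⟨by simp; positivity, ?_⟩, ?_⟩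
  · simpa using (mul_le_of_le_one_right hr0.le (Real.cos_le_one φ)).trans_lt hrh
  simp only [PiLp.smul_apply, vec2_apply_one, smul_eq_mul, mem_Ioo, ← abs_lt, abs_mul,
    abs_of_pos hr0]
  nlinarith [abs_nonneg (Real.sin φ)]

lemma volume_rectangle (a b c d : ℝ) :
    volume {y : E2 | y 0 ∈ Ioo a b ∧ y 1 ∈ Ioo c d} =
      ENNReal.ofReal (b - a) * ENNReal.ofReal (d - c) := by
  have : {y : E2 | y 0 ∈ Ioo a b ∧ y 1 ∈ Ioo c d} =
      WithLp.ofLp ⁻¹' (univ.pi ![Ioo a b, Ioo c d]) := by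
    ext y; simp [Fin.forall_fin_two]
  rw [this, (PiLp.volume_preserving_ofLp (Fin 2)).measure_preimage
    (MeasurableSet.univ_pi fun i => by fin_cases i <;> exact measurableSet_Ioo).nullMeasurableSet,
    volume_pi_pi, Fin.prod_univ_two]
  simp [Real.volume_Ioo]

lemma measureReal_sector_inter_ball_le {α : ℝ} (hα0 : 0 ≤ α) (hα : α ≤ π / 2) {h : ℝ}
    (hh : 0 ≤ h) : volume.real (sector α ∩ Metric.ball 0 h) ≤ 2 * α * h ^ 2 := by
  have hsin : 0 ≤ Real.sin α := Real.sin_nonneg_of_nonneg_of_le_pi hα0 (by linarith [pi_pos])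
  calc volume.real (sector α ∩ Metric.ball 0 h)
      ≤ volume.real {y : E2 | y 0 ∈ Ioo 0 h ∧ y 1 ∈ Ioo (-(h * Real.sin α)) (h * Real.sin α)} :=
        measureReal_mono (sector_inter_ball_subset hα h) (by rw [volume_rectangle]; finiteness)
    _ = 2 * Real.sin α * h ^ 2 := by
        rw [measureReal_def, volume_rectangle, ENNReal.toReal_mul,
          ENNReal.toReal_ofReal (by linarith), ENNReal.toReal_ofReal (by nlinarith)]
        ring
    _ ≤ 2 * α * h ^ 2 := by gcongr; exact Real.sin_le hα0

/-- **Membrane energy of the regularized cone**: with `u(x) = ½(arg x · x^⊥ − x)` and the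
regularized cone `v_h`, one has `∫_S |∇u + ∇uᵀ + ∇v_h ⊗ ∇v_h|² dx ≤ 2 α h²`. -/
theorem membrane_energy_regularized_cone (α h : ℝ) (hα : α ∈ Set.Ioo 0 (π / 2))
    (hh : h ∈ Set.Ioo (0 : ℝ) 1) :
    (∫ x in sector α, frob2 (strain coneU (vh h) x)) ≤ 2 * α * h ^ 2 := by
  obtain ⟨hα0, hα⟩ := hα
  have hαπ : α ≤ π := by linarith [pi_pos]
  have hsphere : ∀ᵐ x : E2, ‖x‖ ≠ h := by
    filter_upwards [measure_eq_zero_iff_ae_notMem.1 (Measure.addHaar_sphere volume (0 : E2) h)]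
      with x hx using by simpa using hx
  calc ∫ x in sector α, frob2 (strain coneU (vh h) x)
      ≤ ∫ x in sector α, (Metric.ball 0 h).indicator 1 x := by
        refine integral_mono_of_nonneg (ae_of_all _ fun x => frob2_nonneg _)
          ((integrable_indicator_iff measurableSet_ball).2 (integrableOn_const
            ((Measure.restrict_apply_le _ _).trans_lt measure_ball_lt_top).ne)) ?_
        filter_upwards [ae_restrict_mem (isOpen_sector hαπ).measurableSet,
          ae_restrict_of_ae hsphere] with x hxS hxh
        exact frob2_strain_coneU_vh_le_indicator hh.1 (sector_subset_slitPlane hαπ hxS) hxh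
    _ = volume.real (sector α ∩ Metric.ball 0 h) := by
        rw [integral_indicator_one measurableSet_ball,
          measureReal_restrict_apply measurableSet_ball, inter_comm]
    _ ≤ 2 * α * h ^ 2 := measureReal_sector_inter_ball_le hα0.le hα.le hh.1.le
end
end

section
/- Radial projection Hausdorff measure bound: Let β ∈ (0, 1), let A ⊂ (−π, π) be a Lebesgue measurable set, and let E ⊂ ℝ² be a set such that for every φ ∈ A there exists x ∈ E with |x| ≥ 1 − β and x/|x| = (cos φ, sin φ). Then ℋ¹(E) ≥ (1 − β) ℒ¹(A), where ℋ¹ is the one-dimensional Hausdorff measure and ℒ¹ the one-dimensional Lebesgue measure. -/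
open MeasureTheory Real Set Matrix
open scoped RealInnerProductSpace

noncomputable section

/-! On `{‖x‖ ≥ ρ}` the radial retraction `x ↦ (ρ / ‖x‖) • x` onto the circle of radius `ρ` is
1-Lipschitz, and two points of that circle whose arguments differ by `θ ≤ ε < π` are at distance
`2ρ |sin (θ / 2)| ≥ ρ cos (ε / 2) θ`. So `arg` is `(ρ cos (ε / 2))⁻¹`-Lipschitz on each part of
`{‖z‖ ≥ ρ}` whose arguments lie in an interval of length `ε`. Cutting `ℝ` into countably many such
intervals gives `ρ cos (ε / 2) ℒ¹(A) ≤ ℋ¹(E)`, and `ε → 0` gives the bound. -/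

open scoped NNReal ENNReal Topology
open Filter Function

theorem hausdorffMeasure_image_le_of_lipschitzOnWith_inter {ι X Y : Type*} [Countable ι]
    [EMetricSpace X] [MeasurableSpace X] [BorelSpace X]
    [EMetricSpace Y] [MeasurableSpace Y] [BorelSpace Y]
    {f : X → Y} {K : ℝ≥0} {d : ℝ} (hd : 0 ≤ d) {s : Set X} {S : ι → Set X}
    (hS : ∀ i, MeasurableSet (S i)) (hS_disj : Pairwise (Disjoint on S))
    (hs : s ⊆ ⋃ i, S i) (hf : ∀ i, LipschitzOnWith K f (s ∩ S i)) :
    μH[d] (f '' s) ≤ (K : ℝ≥0∞) ^ d * μH[d] s := by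
  have hpieces : ∑' i, μH[d] (s ∩ S i) ≤ μH[d] s := by
    simpa only [Measure.restrict_apply (hS _), Measure.restrict_apply_univ, inter_comm] using
      tsum_measure_le_measure_univ (μ := (μH[d] : Measure X).restrict s)
        (fun i ↦ (hS i).nullMeasurableSet) fun i j hij ↦ (hS_disj hij).aedisjoint
  calc μH[d] (f '' s) = μH[d] (⋃ i, f '' (s ∩ S i)) := by
        rw [← image_iUnion, ← inter_iUnion, inter_eq_left.2 hs]
    _ ≤ ∑' i, μH[d] (f '' (s ∩ S i)) := measure_iUnion_le _
    _ ≤ ∑' i, (K : ℝ≥0∞) ^ d * μH[d] (s ∩ S i) :=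
        ENNReal.tsum_le_tsum fun i ↦ (hf i).hausdorffMeasure_image_le hd
    _ ≤ (K : ℝ≥0∞) ^ d * μH[d] s := by
        rw [ENNReal.tsum_mul_left]; gcongr

theorem norm_div_norm_smul_sub_div_norm_smul_le {F : Type*} [NormedAddCommGroup F]
    [InnerProductSpace ℝ F] {ρ : ℝ} {x y : F} (hρ : 0 ≤ ρ) (hx : ρ ≤ ‖x‖) (hy : ρ ≤ ‖y‖) :
    ‖(ρ / ‖x‖) • x - (ρ / ‖y‖) • y‖ ≤ ‖x - y‖ := by
  rcases hρ.eq_or_lt with rfl | hρ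
  · simp
  set r := ‖x‖
  set s := ‖y‖
  have hr : 0 < r := hρ.trans_le hx
  have hs : 0 < s := hρ.trans_le hy
  have hCS : ⟪x, y⟫ ≤ r * s := real_inner_le_norm x y
  have hrs : ρ * ρ ≤ r * s := mul_le_mul hx hy hρ.le hr.le
  rw [← sq_le_sq₀ (norm_nonneg _) (norm_nonneg _), norm_sub_sq_real, norm_sub_sq_real,
    norm_smul, norm_smul, real_inner_smul_left, real_inner_smul_right, Real.norm_of_nonneg
    (by positivity), Real.norm_of_nonneg (by positivity)]
  -- `r s (‖x - y‖² - ‖(ρ / r) • x - (ρ / s) • y‖²)` expands to the right-hand side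
  have key : 0 ≤ r * s * (r - s) ^ 2 + 2 * (r * s - ρ * ρ) * (r * s - ⟪x, y⟫) := by
    have := mul_nonneg (sub_nonneg.2 hrs) (sub_nonneg.2 hCS)
    positivity
  field_simp
  nlinarith [key]

theorem Complex.norm_sub_eq_two_mul_norm_mul_abs_sin {z w : ℂ} (h : ‖z‖ = ‖w‖) :
    ‖z - w‖ = 2 * ‖z‖ * |Real.sin ((arg z - arg w) / 2)| := by
  have hz := norm_mul_exp_arg_mul_I z
  have hw := norm_mul_exp_arg_mul_I w
  have hexp : exp (arg z * I) = exp (arg w * I) * exp (I * ↑(arg z - arg w)) := by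
    rw [← exp_add]; congr 1; push_cast; ring
  have : z - w = ‖z‖ * exp (arg w * I) * (exp (I * ↑(arg z - arg w)) - 1) := by
    calc z - w = ‖z‖ * exp (arg z * I) - ‖z‖ * exp (arg w * I) := by rw [hz, h, hw]
      _ = _ := by rw [hexp]; ring
  rw [this, norm_mul, norm_mul, norm_exp_I_mul_ofReal_sub_one, norm_exp_ofReal_mul_I]
  simp [Real.norm_eq_abs]
  ring

theorem Complex.two_mul_abs_sin_le_norm_sub {ρ : ℝ} {z w : ℂ} (hρ : 0 < ρ) (hz : ρ ≤ ‖z‖)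
    (hw : ρ ≤ ‖w‖) : 2 * ρ * |Real.sin ((arg z - arg w) / 2)| ≤ ‖z - w‖ := by
  have hproj {u : ℂ} (hu : ρ ≤ ‖u‖) : ‖(ρ / ‖u‖) • u‖ = ρ ∧ arg ((ρ / ‖u‖) • u) = arg u := by
    have hpos : 0 < ρ / ‖u‖ := div_pos hρ (hρ.trans_le hu)
    refine ⟨?_, ?_⟩
    · rw [norm_smul, Real.norm_of_nonneg hpos.le, div_mul_cancel₀ _ (hρ.trans_le hu).ne']
    · rw [real_smul, arg_real_mul _ hpos]
  obtain ⟨hz₁, hz₂⟩ := hproj hz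
  obtain ⟨hw₁, hw₂⟩ := hproj hw
  calc 2 * ρ * |Real.sin ((arg z - arg w) / 2)| = ‖(ρ / ‖z‖) • z - (ρ / ‖w‖) • w‖ := by
        rw [norm_sub_eq_two_mul_norm_mul_abs_sin (hz₁.trans hw₁.symm), hz₁, hz₂, hw₂]
    _ ≤ ‖z - w‖ := norm_div_norm_smul_sub_div_norm_smul_le hρ.le hz hw

theorem Real.mul_cos_le_sin {t T : ℝ} (ht : 0 ≤ t) (htT : t ≤ T) (hT : T < π / 2) :
    t * cos T ≤ sin t := by
  have hcos : 0 < cos t := cos_pos_of_mem_Ioo ⟨by linarith [pi_pos], by linarith⟩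
  calc t * cos T ≤ t * cos t :=
        mul_le_mul_of_nonneg_left (cos_le_cos_of_nonneg_of_le_pi ht (by linarith) htT) ht
    _ ≤ tan t * cos t := mul_le_mul_of_nonneg_right (le_tan ht (by linarith)) hcos.le
    _ = sin t := by rw [tan_eq_sin_div_cos, div_mul_cancel₀ _ hcos.ne']

theorem Complex.mul_cos_mul_abs_arg_sub_le_norm_sub {ρ ε : ℝ} {z w : ℂ} (hρ : 0 < ρ)
    (hε : ε < π) (hz : ρ ≤ ‖z‖) (hw : ρ ≤ ‖w‖) (hzw : |arg z - arg w| ≤ ε) :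
    ρ * Real.cos (ε / 2) * |arg z - arg w| ≤ ‖z - w‖ := by
  have hsin := Real.mul_cos_le_sin (t := |arg z - arg w| / 2) (T := ε / 2) (by positivity)
    (by linarith) (by linarith)
  calc ρ * Real.cos (ε / 2) * |arg z - arg w|
      = 2 * ρ * (|arg z - arg w| / 2 * Real.cos (ε / 2)) := by ring
    _ ≤ 2 * ρ * Real.sin (|arg z - arg w| / 2) := by gcongr
    _ ≤ 2 * ρ * |Real.sin ((arg z - arg w) / 2)| := by
        gcongr
        rcases abs_cases (arg z - arg w) with ⟨h, -⟩ | ⟨h, -⟩ <;> rw [h]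
        · exact le_abs_self _
        · rw [neg_div, Real.sin_neg]; exact neg_le_abs _
    _ ≤ ‖z - w‖ := two_mul_abs_sin_le_norm_sub hρ hz hw

theorem Complex.lipschitzOnWith_arg_inter_Ico {ρ ε a b : ℝ} (hρ : 0 < ρ) (hε : 0 < ε)
    (hεπ : ε < π) (hab : b ≤ a + ε) :
    LipschitzOnWith (ρ * Real.cos (ε / 2))⁻¹.toNNReal arg
      ({z : ℂ | ρ ≤ ‖z‖} ∩ arg ⁻¹' Ico a b) := by
  have hc : 0 < ρ * Real.cos (ε / 2) :=
    mul_pos hρ (Real.cos_pos_of_mem_Ioo ⟨by linarith [pi_pos], by linarith⟩)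
  refine LipschitzOnWith.of_dist_le_mul fun z ⟨hz, hza⟩ w ⟨hw, hwa⟩ ↦ ?_
  have hzw : |arg z - arg w| ≤ ε :=
    abs_sub_le_iff.2 ⟨by linarith [hza.2, hwa.1], by linarith [hza.1, hwa.2]⟩
  rw [Real.dist_eq, dist_eq_norm, Real.coe_toNNReal _ (inv_nonneg.2 hc.le), inv_mul_eq_div,
    le_div_iff₀ hc, mul_comm]
  exact mul_cos_mul_abs_arg_sub_le_norm_sub hρ hεπ hz hw hzw

theorem Complex.ofReal_mul_cos_mul_volume_arg_image_le {ρ ε : ℝ} {F : Set ℂ} (hρ : 0 < ρ)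
    (hε : 0 < ε) (hεπ : ε < π) (hF : F ⊆ {z | ρ ≤ ‖z‖}) :
    ENNReal.ofReal (ρ * Real.cos (ε / 2)) * volume (arg '' F) ≤ μH[1] F := by
  set c := ρ * Real.cos (ε / 2)
  have hc : 0 < c := mul_pos hρ (Real.cos_pos_of_mem_Ioo ⟨by linarith [pi_pos], by linarith⟩)
  have himage : μH[1] (arg '' F) ≤ ENNReal.ofReal c⁻¹ * μH[1] F := by
    refine (hausdorffMeasure_image_le_of_lipschitzOnWith_inter
      (S := fun n : ℤ ↦ arg ⁻¹' Ico (n • ε) ((n + 1) • ε)) zero_le_one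
      (fun n ↦ measurable_arg measurableSet_Ico)
      (fun m n hmn ↦ (pairwise_disjoint_Ico_zsmul ε hmn).preimage arg)
      (by rw [← preimage_iUnion, iUnion_Ico_zsmul hε, preimage_univ]; exact subset_univ F)
      fun n ↦ (lipschitzOnWith_arg_inter_Ico hρ hε hεπ (by rw [add_smul, one_smul])).mono
        (inter_subset_inter_left _ hF)).trans_eq ?_
    rw [ENNReal.rpow_one]; rfl
  calc ENNReal.ofReal c * volume (arg '' F)
      ≤ ENNReal.ofReal c * (ENNReal.ofReal c⁻¹ * μH[1] F) := by
        rw [← hausdorffMeasure_real]; gcongr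
    _ = μH[1] F := by
        rw [← mul_assoc, ← ENNReal.ofReal_mul hc.le, mul_inv_cancel₀ hc.ne', ENNReal.ofReal_one,
          one_mul]

theorem Complex.ofReal_mul_volume_arg_image_le {ρ : ℝ} {F : Set ℂ} (hF : F ⊆ {z | ρ ≤ ‖z‖}) :
    ENNReal.ofReal ρ * volume (arg '' F) ≤ μH[1] F := by
  rcases le_or_gt ρ 0 with hρ | hρ
  · simp [ENNReal.ofReal_of_nonpos hρ]
  have hlim : Tendsto (fun ε ↦ ENNReal.ofReal (ρ * Real.cos (ε / 2)) * volume (arg '' F))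
      (𝓝[>] 0) (𝓝 (ENNReal.ofReal ρ * volume (arg '' F))) := by
    refine (ENNReal.Tendsto.mul_const ?_ (Or.inl (ENNReal.ofReal_pos.2 hρ).ne')).mono_left
      nhdsWithin_le_nhds
    exact (ENNReal.continuous_ofReal.comp (by fun_prop)).tendsto' 0 _ (by simp)
  refine le_of_tendsto hlim ?_
  filter_upwards [Ioo_mem_nhdsGT pi_pos] with ε hε using
    ofReal_mul_cos_mul_volume_arg_image_le hρ hε.1 hε.2 hF

theorem arg_orthonormalBasisOneI_repr_symm_eq {x : E2} {φ : ℝ} (hφ : φ ∈ Ioc (-π) π)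
    (h : ‖x‖⁻¹ • x = vec2 (Real.cos φ) (Real.sin φ)) :
    Complex.arg (Complex.orthonormalBasisOneI.repr.symm x) = φ := by
  have hexp : (‖x‖⁻¹ : ℝ) * Complex.orthonormalBasisOneI.repr.symm x =
      Complex.exp (φ * Complex.I) := by
    rw [← Complex.real_smul, ← LinearIsometryEquiv.map_smul, h, Complex.exp_mul_I]
    simp [vec2]
  have hx : x ≠ 0 := by
    rintro rfl
    exact Complex.exp_ne_zero (φ * Complex.I) (by simpa using hexp.symm)
  rw [← Complex.arg_real_mul _ (inv_pos.2 (norm_pos_iff.2 hx)), hexp, Complex.arg_exp_mul_I,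
    toIocMod_eq_self]
  simpa [two_mul, ← add_assoc] using hφ

theorem radial_projection_bound_general (β : ℝ)
    (A : Set ℝ) (hAsub : A ⊆ Set.Ioo (-π) π)
    (E : Set E2)
    (hE : ∀ φ ∈ A, ∃ x ∈ E, 1 - β ≤ ‖x‖ ∧ ‖x‖⁻¹ • x = vec2 (Real.cos φ) (Real.sin φ)) :
    ENNReal.ofReal (1 - β) * volume A ≤ μH[1] E := by
  set e : E2 ≃ₗᵢ[ℝ] ℂ := Complex.orthonormalBasisOneI.repr.symm
  set F := e '' (E ∩ {x | 1 - β ≤ ‖x‖})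
  have hAF : A ⊆ Complex.arg '' F := fun φ hφ ↦ by
    obtain ⟨x, hxE, hxβ, hx⟩ := hE φ hφ
    exact ⟨e x, mem_image_of_mem e ⟨hxE, hxβ⟩,
      arg_orthonormalBasisOneI_repr_symm_eq (Ioo_subset_Ioc_self (hAsub hφ)) hx⟩
  have hF : F ⊆ {z | 1 - β ≤ ‖z‖} := by
    rintro _ ⟨x, ⟨-, hx⟩, rfl⟩
    simpa using hx
  calc ENNReal.ofReal (1 - β) * volume A
      ≤ ENNReal.ofReal (1 - β) * volume (Complex.arg '' F) := by gcongr
    _ ≤ μH[1] F := Complex.ofReal_mul_volume_arg_image_le hF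
    _ = μH[1] (E ∩ {x | 1 - β ≤ ‖x‖}) := e.isometry.hausdorffMeasure_image (Or.inl zero_le_one) _
    _ ≤ μH[1] E := measure_mono inter_subset_left

/-- **Radial projection Hausdorff measure bound**: if `β ∈ (0,1)`, `A ⊆ (−π, π)` is Lebesgue
measurable, and `E ⊆ ℝ²` is such that every angle `φ ∈ A` is attained by some `x ∈ E` with
`|x| ≥ 1 − β`, then `ℋ¹(E) ≥ (1 − β) ℒ¹(A)`. -/
theorem radial_projection_bound (β : ℝ) (hβ : β ∈ Set.Ioo (0 : ℝ) 1)
    (A : Set ℝ) (hA : MeasurableSet A) (hAsub : A ⊆ Set.Ioo (-π) π)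
    (E : Set E2)
    (hE : ∀ φ ∈ A, ∃ x ∈ E, 1 - β ≤ ‖x‖ ∧ ‖x‖⁻¹ • x = vec2 (Real.cos φ) (Real.sin φ)) :
    ENNReal.ofReal (1 - β) * volume A ≤ μH[1] E :=
  radial_projection_bound_general β A hAsub E hE
end
end
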